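/- arXiv:1712.05539 — 3 statements merged into one kernel-verified Lean document; each statement's English description precedes it below -/
import Mathlib

section
/- Let A be a set of 2d points in general position in ℝ^d (every d+1 of them are affinely independent), and let U, W ⊆ A be disjoint subsets with |U| = u, |W| = w, 2 ≤ u ≤ d, 2 ≤ w ≤ d, and u + w ≥ d + 1. Suppose the (u-1)-simplex spanned by U crosses the (w-1)-simplex spanned by W, i.e., the intrinsic (relative) interiors of the convex hulls of U and W have a common point. Then for any two disjoint subsets U', W' ⊆ A with U ⊆ U', W ⊆ W', and |U'| = |W'| = d, the intrinsic interiors of the convex hulls of U' and W' also have a common point. -/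
/-!
A point in the relative interiors of both `conv U` and `conv W` is the same thing as an affine
dependence among the points of `U ∪ W` that is positive on `U` and negative on `W`. Since `U ∪ W`
contains `d + 1` points in general position, it affinely spans `ℝ^d`, so any weights prescribed on
the points of `U' ∪ W'` outside `U ∪ W` extend to an affine dependence `μ` of `U' ∪ W'`. Prescribing
`+1` on `U' \ U` and `-1` on `W' \ W`, the dependence `g + ε μ` is, for small `ε > 0`, still
positive on `U'` and negative on `W'`, so the enlarged simplices cross as well.
-/

open Set Finset Filter Topology

section IntrinsicInterior

theorem intrinsicInterior_eq_interior_of_affineSpan_eq_top {𝕜 V P : Type*} [Ring 𝕜]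
    [AddCommGroup V] [Module 𝕜 V] [TopologicalSpace P] [AddTorsor V P] {s : Set P}
    (hs : affineSpan 𝕜 s = ⊤) : intrinsicInterior 𝕜 s = interior s := by
  have hopen : IsOpenMap ((↑) : affineSpan 𝕜 s → P) :=
    IsOpen.isOpenMap_subtype_val (by rw [hs, AffineSubspace.top_coe]; exact isOpen_univ)
  rw [intrinsicInterior, ← hopen.preimage_interior_eq_interior_preimage continuous_subtype_val,
    image_preimage_eq_inter_range, Subtype.range_coe, hs, AffineSubspace.top_coe, inter_univ]

variable {E : Type*} [NormedAddCommGroup E] [NormedSpace ℝ E]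

theorem AffineIndependent.mem_intrinsicInterior_convexHull_iff {ι : Type*} [Fintype ι]
    {p : ι → E} (hp : AffineIndependent ℝ p) {x : E} :
    x ∈ intrinsicInterior ℝ (convexHull ℝ (range p)) ↔
      ∃ w : ι → ℝ, (∀ i, 0 < w i) ∧ ∑ i, w i = 1 ∧ ∑ i, w i • p i = x := by
  rcases isEmpty_or_nonempty ι with hι | ⟨⟨i₀⟩⟩
  · simp only [range_eq_empty, convexHull_empty, intrinsicInterior_empty, mem_empty_iff_false,
      univ_eq_empty, sum_empty, zero_ne_one, false_and, and_false, exists_false]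
  -- Under `v ↦ v + p i₀`, the points come from an affine basis `b` of `V = vectorSpan ℝ (range p)`,
  -- whose open simplex is described by `AffineBasis.interior_convexHull`.
  set V := vectorSpan ℝ (range p)
  let q : ι → V := fun i =>
    ⟨p i - p i₀, vsub_mem_vectorSpan ℝ (mem_range_self i) (mem_range_self i₀)⟩
  let φ : V →ᵃⁱ[ℝ] E :=
    (AffineIsometryEquiv.vaddConst ℝ (p i₀)).toAffineIsometry.comp V.subtypeₗᵢ.toAffineIsometry
  have hφq : φ ∘ q = p := funext fun i => sub_add_cancel (p i) (p i₀)
  have hq : AffineIndependent ℝ q := AffineIndependent.of_comp φ.toAffineMap (hφq ▸ hp)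
  have hspan : affineSpan ℝ (range q) = ⊤ := by
    have hcard := (Nat.succ_pred_eq_of_pos (Fintype.card_pos_iff.2 ⟨i₀⟩)).symm
    rw [hq.affineSpan_eq_top_iff_card_eq_finrank_add_one, hp.finrank_vectorSpan hcard]
    exact hcard
  let b : AffineBasis ι ℝ V := ⟨q, hq, hspan⟩
  have hφb : ∀ w : ι → ℝ, ∑ i, w i = 1 → φ (univ.affineCombination ℝ b w) = ∑ i, w i • p i := by
    intro w hw
    have := univ.map_affineCombination b w hw φ.toAffineMap
    rw [φ.coe_toAffineMap] at this
    rw [this, univ.affineCombination_eq_linear_combination _ _ hw]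
    exact sum_congr rfl fun i _ => by rw [← congrFun hφq i]; rfl
  have hconv : convexHull ℝ (range p) = φ '' convexHull ℝ (range b) := by
    rw [← hφq, range_comp]
    exact (φ.toAffineMap.image_convexHull (range q)).symm
  rw [hconv, φ.intrinsicInterior_image, intrinsicInterior_eq_interior_of_affineSpan_eq_top
    (by rw [affineSpan_convexHull]; exact b.tot), b.interior_convexHull]
  constructor
  · rintro ⟨v, hv, rfl⟩
    refine ⟨fun i => b.coord i v, hv, b.sum_coord_apply_eq_one v, ?_⟩
    rw [← hφb _ (b.sum_coord_apply_eq_one v), b.affineCombination_coord_eq_self]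
  · rintro ⟨w, hw, hw1, rfl⟩
    exact ⟨univ.affineCombination ℝ b w,
      fun i => (b.coord_apply_combination_of_mem (mem_univ i) hw1).symm ▸ hw i, hφb w hw1⟩

theorem Finset.mem_intrinsicInterior_convexHull_iff {s : Finset E}
    (hs : AffineIndependent ℝ ((↑) : s → E)) {x : E} :
    x ∈ intrinsicInterior ℝ (convexHull ℝ (s : Set E)) ↔
      ∃ w : E → ℝ, (∀ p ∈ s, 0 < w p) ∧ ∑ p ∈ s, w p = 1 ∧ ∑ p ∈ s, w p • p = x := by
  classical
  rw [show (s : Set E) = Set.range ((↑) : s → E) by simp, hs.mem_intrinsicInterior_convexHull_iff]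
  constructor
  · rintro ⟨w, hw, hw1, rfl⟩
    refine ⟨fun p => if hp : p ∈ s then w ⟨p, hp⟩ else 0, fun p hp => by simpa [hp] using hw _,
      by rwa [sum_dite_of_true fun _ => id],
      by simp_rw [dite_smul]; rw [sum_dite_of_true fun _ => id]⟩
  · rintro ⟨w, hw, hw1, rfl⟩
    exact ⟨fun i => w i, fun i => hw i i.2, by rwa [sum_coe_sort s w],
      sum_coe_sort s fun p => w p • p⟩

end IntrinsicInterior

section AffineDependence

variable {E : Type*} [AddCommGroup E] [Module ℝ E]

def IsAffineDependence (s : Finset E) (g : E → ℝ) : Prop :=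
  ∑ p ∈ s, g p = 0 ∧ ∑ p ∈ s, g p • p = 0

theorem sum_indicator_smul_subset {s t : Finset E} (hst : s ⊆ t) (f : E → ℝ) :
    ∑ p ∈ t, (s : Set E).indicator f p • p = ∑ p ∈ s, f p • p := by
  rw [← sum_indicator_subset _ hst]
  exact sum_congr rfl fun p _ => (indicator_smul_apply_left _ f id p).symm

namespace IsAffineDependence

variable {s t : Finset E} {g h : E → ℝ}

theorem add_mul (hg : IsAffineDependence s g) (hh : IsAffineDependence s h) (c : ℝ) :
    IsAffineDependence s fun p => g p + c * h p := by
  constructor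
  · rw [sum_add_distrib, ← mul_sum, hg.1, hh.1, mul_zero, add_zero]
  · simp_rw [add_smul, mul_smul, sum_add_distrib, ← smul_sum, hg.2, hh.2, smul_zero, add_zero]

theorem indicator (hg : IsAffineDependence s g) (hst : s ⊆ t) :
    IsAffineDependence t ((s : Set E).indicator g) :=
  ⟨by rw [sum_indicator_subset _ hst, hg.1], by rw [sum_indicator_smul_subset hst, hg.2]⟩

end IsAffineDependence

theorem exists_sum_smul_eq_and_sum_eq {ι : Type*} [Fintype ι] {p : ι → E}
    (hp : affineSpan ℝ (range p) = ⊤) (v : E) (c : ℝ) :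
    ∃ w : ι → ℝ, ∑ i, w i • p i = v ∧ ∑ i, w i = c := by
  have hcomb (y : E) : ∃ a : ι → ℝ, ∑ i, a i = 1 ∧ ∑ i, a i • p i = y := by
    obtain ⟨a, ha, rfl⟩ := eq_affineCombination_of_mem_affineSpan_of_fintype
      (hp ▸ AffineSubspace.mem_top ℝ E y)
    exact ⟨a, ha, (univ.affineCombination_eq_linear_combination p a ha).symm⟩
  obtain ⟨a, ha, hav⟩ := hcomb v
  obtain ⟨z, hz, hz0⟩ := hcomb 0
  -- `(v, c) = (v, 1) - (0, 1) + c • (0, 1)`, and every `(y, 1)` comes from an affine combination.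
  refine ⟨fun i => a i - z i + c * z i, ?_, ?_⟩
  · simp_rw [add_smul, sub_smul, mul_smul, sum_add_distrib, sum_sub_distrib, ← smul_sum, hav,
      hz0, smul_zero, sub_zero, add_zero]
  · rw [sum_add_distrib, sum_sub_distrib, ← mul_sum, ha, hz, sub_self, zero_add, mul_one]

theorem exists_isAffineDependence_eq_outside {B t : Finset E} (hB : affineSpan ℝ (B : Set E) = ⊤)
    (hBt : B ⊆ t) (h : E → ℝ) :
    ∃ μ : E → ℝ, IsAffineDependence t μ ∧ ∀ p ∈ t, p ∉ B → μ p = h p := by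
  classical
  obtain ⟨w, hwv, hwc⟩ := exists_sum_smul_eq_and_sum_eq (p := ((↑) : B → E))
    (by rwa [Subtype.range_coe]) (-∑ p ∈ t \ B, h p • p) (-∑ p ∈ t \ B, h p)
  refine ⟨fun p => if hp : p ∈ B then w ⟨p, hp⟩ else h p, ⟨?_, ?_⟩, fun p _ hp => dif_neg hp⟩
  · rw [← sum_sdiff hBt, sum_dite_of_false fun p hp => (mem_sdiff.1 hp).2,
      sum_dite_of_true fun _ => id, hwc, sum_coe_sort, add_neg_cancel]
  · simp_rw [dite_smul]
    rw [← sum_sdiff hBt, sum_dite_of_false fun p hp => (mem_sdiff.1 hp).2,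
      sum_dite_of_true fun _ => id, hwv, sum_coe_sort (t \ B) fun p => h p • p, add_neg_cancel]

theorem affineIndependent_of_subset_of_card_le {A : Finset E} {n : ℕ}
    (hgen : ∀ s ⊆ A, s.card = n → AffineIndependent ℝ ((↑) : s → E)) (hn : n ≤ A.card)
    {s : Finset E} (hsA : s ⊆ A) (hs : s.card ≤ n) : AffineIndependent ℝ ((↑) : s → E) := by
  obtain ⟨t, hst, htA, ht⟩ := exists_subsuperset_card_eq hsA hs hn
  exact (hgen t htA ht).mono (coe_subset.2 hst)


theorem affineSpan_eq_top_of_card_eq_finrank_add_one [FiniteDimensional ℝ E] {B : Finset E}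
    (hB : AffineIndependent ℝ ((↑) : B → E)) (hcard : B.card = Module.finrank ℝ E + 1) :
    affineSpan ℝ (B : Set E) = ⊤ := by
  rw [show (B : Set E) = Set.range ((↑) : B → E) by simp,
    hB.affineSpan_eq_top_iff_card_eq_finrank_add_one, Fintype.card_coe, hcard]

end AffineDependence

theorem eventually_forall_pos_add_mul {ι : Type*} {s : Finset ι} {a b : ι → ℝ}
    (h : ∀ i ∈ s, 0 < a i ∨ a i = 0 ∧ 0 < b i) :
    ∀ᶠ ε in 𝓝[>] (0 : ℝ), ∀ i ∈ s, 0 < a i + ε * b i := by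
  rw [eventually_all_finset]
  intro i hi
  rcases h i hi with ha | ⟨ha, hb⟩
  · have hcont : Tendsto (fun ε => a i + ε * b i) (𝓝 0) (𝓝 (a i)) :=
      (continuous_const.add (continuous_id.mul continuous_const)).tendsto' 0 (a i) (by simp)
    exact nhdsWithin_le_nhds (hcont.eventually (lt_mem_nhds ha))
  · filter_upwards [self_mem_nhdsWithin] with ε hε
    rw [ha, zero_add]
    exact mul_pos hε hb

section Crossing

variable {E : Type*} [NormedAddCommGroup E] [NormedSpace ℝ E]

def SimplicesCross (U W : Finset E) : Prop :=
  (intrinsicInterior ℝ (convexHull ℝ (U : Set E)) ∩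
    intrinsicInterior ℝ (convexHull ℝ (W : Set E))).Nonempty

theorem simplicesCross_iff_exists_isAffineDependence [DecidableEq E] {U W : Finset E}
    (hU : AffineIndependent ℝ ((↑) : U → E)) (hW : AffineIndependent ℝ ((↑) : W → E))
    (hUW : Disjoint U W) (hUne : U.Nonempty) :
    SimplicesCross U W ↔
      ∃ g : E → ℝ, IsAffineDependence (U ∪ W) g ∧ (∀ p ∈ U, 0 < g p) ∧ ∀ p ∈ W, g p < 0 := by
  simp only [SimplicesCross, Set.Nonempty, mem_inter_iff, mem_intrinsicInterior_convexHull_iff hU,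
    mem_intrinsicInterior_convexHull_iff hW]
  constructor
  · rintro ⟨x, ⟨α, hα, hα1, hαx⟩, β, hβ, hβ1, hβx⟩
    refine ⟨(U : Set E).indicator α - (W : Set E).indicator β, ⟨?_, ?_⟩, fun p hp => ?_,
      fun p hp => ?_⟩
    · simp_rw [Pi.sub_apply, sum_sub_distrib, sum_indicator_subset _ subset_union_left,
        sum_indicator_subset _ subset_union_right, hα1, hβ1, sub_self]
    · simp_rw [Pi.sub_apply, sub_smul, sum_sub_distrib, sum_indicator_smul_subset subset_union_left,
        sum_indicator_smul_subset subset_union_right, hαx, hβx, sub_self]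
    · simp [hp, disjoint_left.1 hUW hp, hα p hp]
    · simp [hp, disjoint_right.1 hUW hp, hβ p hp]
  · rintro ⟨g, ⟨hg1, hg2⟩, hgU, hgW⟩
    rw [sum_union hUW] at hg1 hg2
    set c := ∑ p ∈ U, g p
    have hc : 0 < c := sum_pos hgU hUne
    refine ⟨c⁻¹ • ∑ p ∈ U, g p • p,
      ⟨fun p => c⁻¹ * g p, fun p hp => mul_pos (inv_pos.2 hc) (hgU p hp), ?_, ?_⟩,
      fun p => c⁻¹ * -g p, fun p hp => mul_pos (inv_pos.2 hc) (neg_pos.2 (hgW p hp)), ?_, ?_⟩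
    · rw [← mul_sum, inv_mul_cancel₀ hc.ne']
    · simp_rw [mul_smul, ← smul_sum]
    · rw [← mul_sum, sum_neg_distrib, neg_eq_of_add_eq_zero_left hg1, inv_mul_cancel₀ hc.ne']
    · simp_rw [mul_smul, neg_smul, ← smul_sum, sum_neg_distrib, neg_eq_of_add_eq_zero_left hg2]

theorem SimplicesCross.nonempty_left {U W : Finset E} (h : SimplicesCross U W) : U.Nonempty := by
  obtain ⟨x, hx, -⟩ := h
  exact coe_nonempty.1 (convexHull_nonempty_iff.1 ⟨x, intrinsicInterior_subset hx⟩)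

theorem SimplicesCross.mono {U W U' W' : Finset E} (h : SimplicesCross U W)
    (hU' : AffineIndependent ℝ ((↑) : U' → E)) (hW' : AffineIndependent ℝ ((↑) : W' → E))
    (hUW' : Disjoint U' W') (hUU' : U ⊆ U') (hWW' : W ⊆ W')
    (hspan : affineSpan ℝ ((U : Set E) ∪ W) = ⊤) : SimplicesCross U' W' := by
  classical
  have hUW : Disjoint U W := hUW'.mono hUU' hWW'
  have hUne := h.nonempty_left
  have hsub : U ∪ W ⊆ U' ∪ W' := union_subset_union hUU' hWW'
  obtain ⟨g₀, hg₀, hg₀U, hg₀W⟩ := (simplicesCross_iff_exists_isAffineDependence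
    (hU'.mono (coe_subset.2 hUU')) (hW'.mono (coe_subset.2 hWW')) hUW hUne).1 h
  obtain ⟨μ, hμ, hμeq⟩ :=
    exists_isAffineDependence_eq_outside (by rwa [coe_union]) hsub fun p => if p ∈ U' then 1 else -1
  set g := ((U ∪ W : Finset E) : Set E).indicator g₀
  have hg_mem : ∀ p ∈ U ∪ W, g p = g₀ p := fun p hp => indicator_of_mem hp g₀
  have hg_notMem : ∀ p ∉ U ∪ W, g p = 0 := fun p hp => indicator_of_notMem hp g₀
  have hgU' : ∀ p ∈ U', 0 < g p ∨ g p = 0 ∧ 0 < μ p := by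
    intro p hp
    by_cases hpU : p ∈ U
    · exact .inl (hg_mem p (Finset.mem_union_left W hpU) ▸ hg₀U p hpU)
    · have hpUW : p ∉ U ∪ W :=
        Finset.notMem_union.2 ⟨hpU, fun hpW => disjoint_left.1 hUW' hp (hWW' hpW)⟩
      exact .inr ⟨hg_notMem p hpUW, by simp [hμeq p (Finset.mem_union_left W' hp) hpUW, hp]⟩
  have hgW' : ∀ p ∈ W', 0 < -g p ∨ -g p = 0 ∧ 0 < -μ p := by
    intro p hp
    have hpU' : p ∉ U' := disjoint_right.1 hUW' hp
    by_cases hpW : p ∈ W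
    · exact .inl (neg_pos.2 (hg_mem p (Finset.mem_union_right U hpW) ▸ hg₀W p hpW))
    · have hpUW : p ∉ U ∪ W := Finset.notMem_union.2 ⟨fun hpU => hpU' (hUU' hpU), hpW⟩
      exact .inr ⟨neg_eq_zero.2 (hg_notMem p hpUW),
        by simp [hμeq p (Finset.mem_union_right U' hp) hpUW, hpU']⟩
  obtain ⟨ε, hεU, hεW⟩ :=
    ((eventually_forall_pos_add_mul hgU').and (eventually_forall_pos_add_mul hgW')).exists
  exact (simplicesCross_iff_exists_isAffineDependence hU' hW' hUW' (hUne.mono hUU')).2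
    ⟨fun p => g p + ε * μ p, (hg₀.indicator hsub).add_mul hμ ε, hεU,
      fun p hp => by linarith [hεW p hp]⟩

end Crossing

theorem crossing_extension_general (d u w : ℕ) (A : Finset (EuclideanSpace ℝ (Fin d)))
    (hA : A.card = 2 * d)
    (hgen : ∀ s ⊆ A, s.card = d + 1 →
      AffineIndependent ℝ (fun x : s => (x : EuclideanSpace ℝ (Fin d))))
    (U W : Finset (EuclideanSpace ℝ (Fin d)))
    (hu : U.card = u) (hw : W.card = w)
    (huw : d + 1 ≤ u + w)
    (hcross : (intrinsicInterior ℝ (convexHull ℝ (U : Set (EuclideanSpace ℝ (Fin d)))) ∩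
      intrinsicInterior ℝ (convexHull ℝ (W : Set (EuclideanSpace ℝ (Fin d))))).Nonempty) :
    ∀ U' W' : Finset (EuclideanSpace ℝ (Fin d)), U' ⊆ A → W' ⊆ A → Disjoint U' W' →
      U ⊆ U' → W ⊆ W' → U'.card = d → W'.card = d →
      (intrinsicInterior ℝ (convexHull ℝ (U' : Set (EuclideanSpace ℝ (Fin d)))) ∩
        intrinsicInterior ℝ (convexHull ℝ (W' : Set (EuclideanSpace ℝ (Fin d))))).Nonempty := by
  classical
  intro U' W' hU'A hW'A hUW' hUU' hWW' hcU' hcW'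
  have hud := Finset.card_le_card hUU'
  have hwd := Finset.card_le_card hWW'
  have hind : ∀ s ⊆ A, s.card ≤ d → AffineIndependent ℝ ((↑) : s → EuclideanSpace ℝ (Fin d)) :=
    fun s hsA hs => affineIndependent_of_subset_of_card_le hgen (by omega) hsA (by omega)
  obtain ⟨B, hBUW, hB⟩ := exists_subset_card_eq (s := U ∪ W) (n := d + 1)
    (by rw [card_union_of_disjoint (hUW'.mono hUU' hWW')]; omega)
  have hBA : B ⊆ A :=
    hBUW.trans ((Finset.union_subset_union hUU' hWW').trans (Finset.union_subset hU'A hW'A))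
  have hspan : affineSpan ℝ ((U : Set (EuclideanSpace ℝ (Fin d))) ∪ W) = ⊤ :=
    eq_top_mono (affineSpan_mono ℝ (coe_union U W ▸ coe_subset.2 hBUW))
      (affineSpan_eq_top_of_card_eq_finrank_add_one (hgen B hBA hB) (by simp [hB]))
  exact SimplicesCross.mono hcross (hind U' hU'A hcU'.le) (hind W' hW'A hcW'.le) hUW' hUU' hWW'
    hspan

/-- **crossing extension lemma.** Let `A` be a set of `2d` points in general
position in `ℝ^d`, and `U, W ⊆ A` disjoint with `|U| = u`, `|W| = w`, `2 ≤ u, w ≤ d`,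
`u + w ≥ d + 1`. If the simplices spanned by `U` and `W` cross (their convex hulls share a
point of their relative interiors), then the `(d-1)`-simplices spanned by any disjoint
`U' ⊇ U`, `W' ⊇ W` inside `A` with `|U'| = |W'| = d` also cross. -/
theorem crossing_extension (d u w : ℕ) (A : Finset (EuclideanSpace ℝ (Fin d)))
    (hA : A.card = 2 * d)
    (hgen : ∀ s ⊆ A, s.card = d + 1 →
      AffineIndependent ℝ (fun x : s => (x : EuclideanSpace ℝ (Fin d))))
    (U W : Finset (EuclideanSpace ℝ (Fin d)))
    (hUA : U ⊆ A) (hWA : W ⊆ A) (hUW : Disjoint U W)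
    (hu : U.card = u) (hw : W.card = w)
    (hu2 : 2 ≤ u) (hud : u ≤ d) (hw2 : 2 ≤ w) (hwd : w ≤ d)
    (huw : d + 1 ≤ u + w)
    (hcross : (intrinsicInterior ℝ (convexHull ℝ (U : Set (EuclideanSpace ℝ (Fin d)))) ∩
      intrinsicInterior ℝ (convexHull ℝ (W : Set (EuclideanSpace ℝ (Fin d))))).Nonempty) :
    ∀ U' W' : Finset (EuclideanSpace ℝ (Fin d)), U' ⊆ A → W' ⊆ A → Disjoint U' W' →
      U ⊆ U' → W ⊆ W' → U'.card = d → W'.card = d →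
      (intrinsicInterior ℝ (convexHull ℝ (U' : Set (EuclideanSpace ℝ (Fin d)))) ∩
        intrinsicInterior ℝ (convexHull ℝ (W' : Set (EuclideanSpace ℝ (Fin d))))).Nonempty :=
  crossing_extension_general d u w A hA hgen U W hu hw huw hcross
end

section
/- Let m ≥ d + 2, let a_1, …, a_m be points in ℝ^d that affinely span ℝ^d, and let g_1, …, g_m in ℝ^(m-d-1) be a Gale transform of (a_1, …, a_m), i.e., for every α ∈ ℝ^(m-d-1) the vector (⟨α, g_1⟩, …, ⟨α, g_m⟩) satisfies Σ_i ⟨α, g_i⟩ a_i = 0 and Σ_i ⟨α, g_i⟩ = 0 (the coordinate vectors of the g_i form a basis of the affine-dependence space). Let α ∈ ℝ^(m-d-1) with α ≠ 0 define the linear hyperplane h = {x : ⟨α, x⟩ = 0}, and suppose the index sets I⁺ = {i : ⟨α, g_i⟩ > 0} and I⁻ = {j : ⟨α, g_j⟩ < 0} each have at least 2 elements. Then the convex hull of {a_i : i ∈ I⁺} and the convex hull of {a_j : j ∈ I⁻} contain a common point in their relative (intrinsic) interiors. -/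
open Finset

lemma pos_combo_mem_intrinsicInterior {ι : Type*} [Fintype ι] [Nonempty ι]
    {E : Type*} [NormedAddCommGroup E] [NormedSpace ℝ E] [FiniteDimensional ℝ E]
    (a : ι → E) (w : ι → ℝ) (hw : ∀ i, 0 < w i) (h1 : ∑ i, w i = 1) :
    ∑ i, w i • a i ∈ intrinsicInterior ℝ (convexHull ℝ (Set.range a)) := by
  classical
  set p : E := ∑ i, w i • a i with hp
  set C : Set E := convexHull ℝ (Set.range a) with hC
  -- p in convex hull
  have hpC : p ∈ C := by
    have := Finset.centerMass_mem_convexHull (univ : Finset ι) (w := w) (z := a)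
      (fun i _ => (hw i).le) (by rw [h1]; exact one_pos) (fun i _ => Set.mem_range_self i)
    rwa [Finset.centerMass_eq_of_sum_1 _ _ h1] at this
  -- p in affine span
  have hpA : p ∈ affineSpan ℝ (Set.range a) := by
    have := affineCombination_mem_affineSpan (s := (univ : Finset ι)) h1 a
    rwa [Finset.affineCombination_eq_linear_combination _ _ _ h1] at this
  set V : Submodule ℝ E := vectorSpan ℝ (Set.range a) with hV
  -- the linear map
  set L : (ι → ℝ) →ₗ[ℝ] E :=
    ∑ i, LinearMap.smulRight (LinearMap.proj i : (ι → ℝ) →ₗ[ℝ] ℝ) (a i - p) with hLdef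
  have hL : ∀ c : ι → ℝ, L c = ∑ i, c i • (a i - p) := by
    intro c; simp [hLdef]
  have hLmem : ∀ c : ι → ℝ, L c ∈ V := by
    intro c
    rw [hL]
    refine Submodule.sum_mem _ fun i _ => Submodule.smul_mem _ _ ?_
    have h := AffineSubspace.vsub_mem_direction
      (subset_affineSpan ℝ _ (Set.mem_range_self i)) hpA
    rwa [direction_affineSpan, vsub_eq_sub] at h
  set σ : (ι → ℝ) →ₗ[ℝ] ℝ := ∑ i, (LinearMap.proj i : (ι → ℝ) →ₗ[ℝ] ℝ) with hσdef
  have hσ : ∀ c : ι → ℝ, σ c = ∑ i, c i := by intro c; simp [hσdef]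
  set Z : Submodule ℝ (ι → ℝ) := LinearMap.ker σ with hZ
  have hsingle : ∀ j : ι, L (Pi.single j (1:ℝ)) = a j - p := by
    intro j
    rw [hL]
    rw [Finset.sum_eq_single j]
    · simp
    · intro i _ hij; simp [Pi.single_apply, hij]
    · simp
  have hsurj : ∀ v ∈ V, ∃ c : ι → ℝ, σ c = 0 ∧ L c = v := by
    intro v hv
    have hVle : V ≤ Submodule.map L Z := by
      inhabit ι
      have i0 : ι := default
      rw [hV, vectorSpan_eq_span_vsub_set_right ℝ (Set.mem_range_self i0)]
      rw [Submodule.span_le]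
      rintro x ⟨y, ⟨j, rfl⟩, rfl⟩
      refine Submodule.mem_map.mpr ⟨Pi.single j (1:ℝ) - Pi.single i0 1, ?_, ?_⟩
      · show σ _ = 0
        rw [map_sub, hσ, hσ]
        simp
      · rw [map_sub, hsingle, hsingle]
        simp [vsub_eq_sub]
    obtain ⟨c, hc, hcv⟩ := hVle hv
    exact ⟨c, hc, hcv⟩
  -- the continuous linear map Z → V
  set L' : Z →L[ℝ] V :=
    LinearMap.toContinuousLinearMap
      ((L.comp Z.subtype).codRestrict V (fun c => hLmem _)) with hL'def
  have hL'val : ∀ z : Z, (L' z : E) = L (z : ι → ℝ) := by intro z; rfl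
  have hL'surj : Function.Surjective L' := by
    rintro ⟨v, hv⟩
    obtain ⟨c, hc0, hcv⟩ := hsurj v hv
    exact ⟨⟨c, by simpa [hZ] using hc0⟩, Subtype.ext hcv⟩
  have hopen : IsOpenMap L' := ContinuousLinearMap.isOpenMap L' hL'surj
  set O : Set Z := {c : Z | ∀ i, -w i < (c : ι → ℝ) i} with hO
  have hOopen : IsOpen O := by
    have : O = ⋂ i, (fun c : Z => (c : ι → ℝ) i) ⁻¹' Set.Ioi (-w i) := by
      ext c; simp [hO]
    rw [this]
    exact isOpen_iInter_of_finite fun i =>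
      ((continuous_apply i).comp continuous_subtype_val).isOpen_preimage _ isOpen_Ioi
  have h0O : (0 : Z) ∈ O := by intro i; simpa using hw i
  obtain ⟨T, hTopen, hTpre⟩ := isOpen_induced_iff.mp (hopen O hOopen)
  have h0T : (0 : E) ∈ T := by
    have : (0 : V) ∈ L' '' O := ⟨0, h0O, map_zero _⟩
    rw [← hTpre] at this
    exact this
  -- main conclusion
  have hpA' : p ∈ affineSpan ℝ C := by rw [hC, affineSpan_convexHull]; exact hpA
  rw [mem_intrinsicInterior]
  refine ⟨⟨p, hpA'⟩, ?_, rfl⟩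
  rw [mem_interior]
  refine ⟨(Subtype.val : affineSpan ℝ C → E) ⁻¹' ((fun x => p + x) '' T), ?_,
    (continuous_subtype_val.isOpen_preimage _ ((Homeomorph.addLeft p).isOpenMap T hTopen)), ?_⟩
  · rintro ⟨x, hxA⟩ hx
    obtain ⟨t, htT, hxpt⟩ := hx
    have hxpt' : p + t = x := hxpt
    have hvs : vectorSpan ℝ C = V := by
      rw [hC, hV, ← direction_affineSpan, ← direction_affineSpan, affineSpan_convexHull]
    have htV : t ∈ V := by
      have h := AffineSubspace.vsub_mem_direction hxA hpA'
      rw [direction_affineSpan, hvs, vsub_eq_sub, ← hxpt'] at h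
      simpa using h
    have : (⟨t, htV⟩ : V) ∈ L' '' O := by rw [← hTpre]; exact htT
    obtain ⟨z, hzO, hzt⟩ := this
    have hzt' : L (z : ι → ℝ) = t := by rw [← hL'val, hzt]
    have hz0 : ∑ i, (z : ι → ℝ) i = 0 := by
      have h2 : σ (z : ι → ℝ) = 0 := z.2
      rwa [hσ] at h2
    have hxeq : x = ∑ i, (w i + (z : ι → ℝ) i) • a i := by
      rw [← hxpt', ← hzt', hL, hp]
      simp only [add_smul, smul_sub, Finset.sum_add_distrib, Finset.sum_sub_distrib,
        ← Finset.sum_smul, hz0, zero_smul, sub_zero]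
    show x ∈ C
    rw [hxeq]
    have hsum1 : ∑ i, (w i + (z : ι → ℝ) i) = 1 := by
      rw [Finset.sum_add_distrib, h1, hz0, add_zero]
    have := Finset.centerMass_mem_convexHull (univ : Finset ι)
      (w := fun i => w i + (z : ι → ℝ) i) (z := a)
      (fun i _ => by show (0:ℝ) ≤ w i + (z : ι → ℝ) i; have := hzO i; have := hw i; linarith)
      (by rw [hsum1]; exact one_pos) (fun i _ => Set.mem_range_self i)
    rwa [Finset.centerMass_eq_of_sum_1 _ _ hsum1] at this
  · exact ⟨0, h0T, by simp⟩


/-- **Gale transform and crossing simplices.** Let `m ≥ d + 2`, let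
`a_1, …, a_m` affinely span `ℝ^d`, and let `g_1, …, g_m ∈ ℝ^(m-d-1)` be a Gale transform:
for every `α ∈ ℝ^(m-d-1)`, the vector `μ_i = ⟨α, g_i⟩` satisfies `Σ μ_i • a_i = 0` and
`Σ μ_i = 0`. Let `α ≠ 0` define the linear hyperplane `{x : ⟨α, x⟩ = 0}` and suppose
`I⁺ = {i : ⟨α, g_i⟩ > 0}` and `I⁻ = {j : ⟨α, g_j⟩ < 0}` each have at least two elements.
Then the convex hulls of `{a_i : i ∈ I⁺}` and `{a_j : j ∈ I⁻}` contain a common point of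
their relative (intrinsic) interiors. -/
theorem gale_hyperplane_crossing (d m : ℕ) (hm : d + 2 ≤ m)
    (a : Fin m → EuclideanSpace ℝ (Fin d))
    (hspan : affineSpan ℝ (Set.range a) = ⊤)
    (g : Fin m → EuclideanSpace ℝ (Fin (m - d - 1)))
    (hGale : ∀ α : EuclideanSpace ℝ (Fin (m - d - 1)),
      (∑ i, (∑ k, α k * g i k) • a i = 0) ∧ (∑ i, ∑ k, α k * g i k = 0))
    (α : EuclideanSpace ℝ (Fin (m - d - 1))) (hα : α ≠ 0)
    (hplus : 2 ≤ {i : Fin m | 0 < ∑ k, α k * g i k}.ncard)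
    (hminus : 2 ≤ {i : Fin m | ∑ k, α k * g i k < 0}.ncard) :
    (intrinsicInterior ℝ (convexHull ℝ (a '' {i : Fin m | 0 < ∑ k, α k * g i k})) ∩
      intrinsicInterior ℝ
        (convexHull ℝ (a '' {i : Fin m | ∑ k, α k * g i k < 0}))).Nonempty := by
  classical
  set μ : Fin m → ℝ := fun i => ∑ k, α k * g i k with hμ
  obtain ⟨hvec0, hsc0⟩ := hGale α
  set P : Finset (Fin m) := Finset.univ.filter (fun i => 0 < μ i) with hPdef
  set N : Finset (Fin m) := Finset.univ.filter (fun i => μ i < 0) with hNdef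
  -- nonemptiness
  have hplus' : 2 ≤ {i : Fin m | 0 < μ i}.ncard := hplus
  have hminus' : 2 ≤ {i : Fin m | μ i < 0}.ncard := hminus
  have hPset : {i : Fin m | 0 < μ i}.Nonempty :=
    Set.nonempty_of_ncard_ne_zero (by omega)
  have hNset : {i : Fin m | μ i < 0}.Nonempty :=
    Set.nonempty_of_ncard_ne_zero (by omega)
  -- filter identity
  have hff : ∀ f : Fin m → ℝ,
      (Finset.univ.filter (fun i => ¬ 0 < μ i)).filter (fun i => μ i < 0) = N := by
    intro f
    rw [Finset.filter_filter, hNdef]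
    ext i
    simp only [Finset.mem_filter, Finset.mem_univ, true_and]
    constructor
    · rintro ⟨-, h⟩; exact h
    · intro h; exact ⟨not_lt.mpr h.le, h⟩
  -- scalar split
  have hSsplit : ∑ i ∈ P, μ i + ∑ i ∈ N, μ i = 0 := by
    have h1 := Finset.sum_filter_add_sum_filter_not Finset.univ (fun i => 0 < μ i) μ
    have h2 : ∑ i ∈ (Finset.univ.filter (fun i => ¬ 0 < μ i)).filter (fun i => μ i < 0),
        μ i = ∑ i ∈ Finset.univ.filter (fun i => ¬ 0 < μ i), μ i := by
      apply Finset.sum_filter_of_ne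
      intro x hx hne
      rw [Finset.mem_filter] at hx
      exact lt_of_le_of_ne (not_lt.mp hx.2) hne
    rw [hff μ] at h2
    rw [← h2] at h1
    rw [h1]
    exact hsc0
  have hVsplit : ∑ i ∈ P, μ i • a i + ∑ i ∈ N, μ i • a i = 0 := by
    have h1 := Finset.sum_filter_add_sum_filter_not Finset.univ (fun i => 0 < μ i)
      (fun i => μ i • a i)
    have h2 : ∑ i ∈ (Finset.univ.filter (fun i => ¬ 0 < μ i)).filter (fun i => μ i < 0),
        μ i • a i = ∑ i ∈ Finset.univ.filter (fun i => ¬ 0 < μ i), μ i • a i := by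
      apply Finset.sum_filter_of_ne
      intro x hx hne
      rw [Finset.mem_filter] at hx
      refine lt_of_le_of_ne (not_lt.mp hx.2) fun h0 => hne ?_
      rw [h0, zero_smul]
    rw [hff μ] at h2
    rw [← h2] at h1
    rw [h1]
    exact hvec0
  set S : ℝ := ∑ i ∈ P, μ i with hSdef
  have hSpos : 0 < S := by
    refine Finset.sum_pos (fun i hi => (Finset.mem_filter.mp hi).2) ?_
    obtain ⟨i, hi⟩ := hPset
    exact ⟨i, Finset.mem_filter.mpr ⟨Finset.mem_univ i, hi⟩⟩
  set q : EuclideanSpace ℝ (Fin d) := S⁻¹ • ∑ i ∈ P, μ i • a i with hq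
  -- subtype instances
  haveI : Fintype ↥{i : Fin m | 0 < μ i} := Fintype.ofFinite _
  haveI : Fintype ↥{i : Fin m | μ i < 0} := Fintype.ofFinite _
  haveI : Nonempty ↥{i : Fin m | 0 < μ i} := hPset.to_subtype
  haveI : Nonempty ↥{i : Fin m | μ i < 0} := hNset.to_subtype
  have hmemP : ∀ x : Fin m, x ∈ P ↔ x ∈ {i : Fin m | 0 < μ i} := by
    intro x; simp [hPdef]
  have hmemN : ∀ x : Fin m, x ∈ N ↔ x ∈ {i : Fin m | μ i < 0} := by
    intro x; simp [hNdef]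
  -- positive side
  have hplus_mem : q ∈ intrinsicInterior ℝ
      (convexHull ℝ (a '' {i : Fin m | 0 < μ i})) := by
    have hw : ∀ i : ↥{i : Fin m | 0 < μ i}, 0 < μ i / S := fun i => div_pos i.2 hSpos
    have hw1 : ∑ i : ↥{i : Fin m | 0 < μ i}, μ i / S = 1 := by
      rw [← Finset.sum_div, ← Finset.sum_subtype P hmemP μ, ← hSdef,
        div_self hSpos.ne']
    have hmain := pos_combo_mem_intrinsicInterior
      (fun i : ↥{i : Fin m | 0 < μ i} => a i) (fun i => μ i / S) hw hw1
    have hrange : Set.range (fun i : ↥{i : Fin m | 0 < μ i} => a i)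
        = a '' {i : Fin m | 0 < μ i} := (Set.image_eq_range a _).symm
    have hqeq : ∑ i : ↥{i : Fin m | 0 < μ i}, (μ i / S) • a i = q := by
      rw [hq, Finset.smul_sum, Finset.sum_subtype P hmemP (fun i => S⁻¹ • (μ i • a i))]
      exact Finset.sum_congr rfl fun i _ => by rw [smul_smul, div_eq_inv_mul]
    rwa [hrange, hqeq] at hmain
  have hminus_mem : q ∈ intrinsicInterior ℝ
      (convexHull ℝ (a '' {i : Fin m | μ i < 0})) := by
    have hw : ∀ i : ↥{i : Fin m | μ i < 0}, 0 < -μ i / S :=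
      fun i => div_pos (neg_pos.mpr i.2) hSpos
    have hNsum : ∑ i ∈ N, -μ i = S := by
      rw [Finset.sum_neg_distrib]
      linarith [hSsplit]
    have hw1 : ∑ i : ↥{i : Fin m | μ i < 0}, -μ i / S = 1 := by
      rw [← Finset.sum_div, ← Finset.sum_subtype N hmemN (fun i => -μ i), hNsum,
        div_self hSpos.ne']
    have hmain := pos_combo_mem_intrinsicInterior
      (fun i : ↥{i : Fin m | μ i < 0} => a i) (fun i => -μ i / S) hw hw1
    have hrange : Set.range (fun i : ↥{i : Fin m | μ i < 0} => a i)
        = a '' {i : Fin m | μ i < 0} := (Set.image_eq_range a _).symm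
    have hqeq : ∑ i : ↥{i : Fin m | μ i < 0}, (-μ i / S) • a i = q := by
      have hNv : ∑ i ∈ N, (-μ i) • a i = ∑ i ∈ P, μ i • a i := by
        have h3 : ∑ i ∈ N, (-μ i) • a i = -∑ i ∈ N, μ i • a i := by
          simp [neg_smul]
        rw [h3]
        exact neg_eq_of_add_eq_zero_left hVsplit
      rw [hq, ← hNv, Finset.smul_sum,
        Finset.sum_subtype N hmemN (fun i => S⁻¹ • ((-μ i) • a i))]
      exact Finset.sum_congr rfl fun i _ => by rw [smul_smul, div_eq_inv_mul]
    rwa [hrange, hqeq] at hmain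
  exact ⟨q, hplus_mem, hminus_mem⟩
end

section
/- Let d ≥ 3 and let p_1, …, p_{2d+2} be vectors in ℝ^(d+1) such that every d+1 of them are linearly independent (span ℝ^(d+1)). Partition the index set into d classes: C_1 = {1,2,3}, C_2 = {4,5,6}, and C_k = {2k+1, 2k+2} for 3 ≤ k ≤ d. Then there exists a nonzero α ∈ ℝ^(d+1) such that, with h⁺ = {x : ⟨α,x⟩ > 0} and h⁻ = {x : ⟨α,x⟩ < 0}, each of h⁺ and h⁻ contains at least 2 of the points p_1, …, p_{2d+2}, and each of h⁺ and h⁻ contains at most one point from each class C_i (1 ≤ i ≤ d). -/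
/-- Class index (0-based) of the `j`-th vector (0-based): `C_1 = {1,2,3}` has indices
`0,1,2`, `C_2 = {4,5,6}` has indices `3,4,5`, and `C_k = {2k+1, 2k+2}` has indices
`2k, 2k+1` for `3 ≤ k ≤ d`. -/
def classIdx (j : ℕ) : ℕ := if j < 3 then 0 else if j < 6 then 1 else j / 2 - 1

/-!
Let `W` be the subspace of those `α` with `⟪α, p (2c+2) + p (2c+3)⟫ = 0` for every two-point
class `c`; it has dimension at least `3`, and every nonzero `α ∈ W` puts the two points of such a
class on opposite sides or on the hyperplane. For the two three-point classes we need, in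
addition, that no two of the three values `⟪α, p i⟫` have the same strict sign, i.e. that their
median vanishes. Two odd continuous functions on a space of dimension `≥ 3` have a common
nonzero zero (Borsuk–Ulam on `S²`), and here this can be seen directly: the zero set of the
second median contains a path from some `u` to `-u` avoiding `0`, and the intermediate value
theorem along it yields a zero of the first median. Such a path consists of three segments
through preimages of `±eᵢ` when the three functionals of the second class are independent on
`W`; otherwise a linear relation between them singles out a plane on which the second condition
holds identically.

Finally, by general position a nonzero `α` is orthogonal to at most `d` of the points, and
each open half-space contains at most one point from each of the `d` classes, hence at most `d`
points; so each contains at least `2d + 2 - d - d = 2`.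
-/

open Module
open scoped RealInnerProductSpace

def signSeparated (ι : Type*) : Set (ι → ℝ) := {y | Pairwise fun i j => y i * y j ≤ 0}

theorem mem_signSeparated_fin_three_iff {y : Fin 3 → ℝ} :
    y ∈ signSeparated (Fin 3) ↔ y 0 * y 1 ≤ 0 ∧ y 1 * y 2 ≤ 0 ∧ y 2 * y 0 ≤ 0 := by
  refine ⟨fun h => ⟨h (by decide), h (by decide), h (by decide)⟩,
    fun ⟨h01, h12, h20⟩ i j hij => ?_⟩
  fin_cases i <;> fin_cases j <;> simp at hij ⊢ <;>
    linarith [mul_comm (y 0) (y 1), mul_comm (y 1) (y 2), mul_comm (y 2) (y 0)]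

noncomputable def median3 (y : Fin 3 → ℝ) : ℝ :=
  min (max (y 0) (y 1)) (min (max (y 1) (y 2)) (max (y 2) (y 0)))

theorem median3_neg (y : Fin 3 → ℝ) : median3 (-y) = -median3 y := by
  simp only [median3, Pi.neg_apply, max_neg_neg, min_neg_neg, neg_inj]
  -- the maximum of the pairwise minima is also the median
  grind

theorem continuous_median3 : Continuous median3 := by
  unfold median3; fun_prop

theorem mem_signSeparated_of_median3_eq_zero {y : Fin 3 → ℝ} (h : median3 y = 0) :
    y ∈ signSeparated (Fin 3) := by
  have hpos : ¬ 0 < median3 y := h.not_gt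
  have hneg : ¬ median3 y < 0 := h.not_lt
  simp only [median3, lt_min_iff, lt_max_iff, min_lt_iff, max_lt_iff] at hpos hneg
  refine mem_signSeparated_fin_three_iff.2 ⟨?_, ?_, ?_⟩ <;>
    by_contra! hmul <;> rcases mul_pos_iff.1 hmul with ⟨_, _⟩ | ⟨_, _⟩ <;> tauto

theorem JoinedIn.exists_eq_zero_of_map_neg {X : Type*} [TopologicalSpace X] [Neg X]
    {F : Set X} {u : X} (h : JoinedIn F u (-u)) {φ : X → ℝ} (hφ : Continuous φ)
    (hodd : φ (-u) = -φ u) : ∃ x ∈ F, φ x = 0 := by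
  obtain ⟨γ, hγF⟩ := h
  have hmem : (0 : ℝ) ∈ Set.range (φ ∘ γ) := by
    refine mem_range_of_exists_le_of_exists_ge (hφ.comp γ.continuous) ?_ ?_ <;>
      rcases le_total (φ u) 0 with hu | hu
    exacts [⟨0, by simpa⟩, ⟨1, by simp [hodd]; linarith⟩, ⟨1, by simp [hodd]; linarith⟩,
      ⟨0, by simpa⟩]
  obtain ⟨t, ht⟩ := hmem
  exact ⟨γ t, hγF t, ht⟩

theorem segment_single_neg_single_subset {ι : Type*} [DecidableEq ι] {i j : ι} (hij : i ≠ j) :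
    segment ℝ (Pi.single i 1) (-Pi.single j 1) ⊆ {0}ᶜ ∩ signSeparated ι := by
  rintro _ ⟨a, b, ha, hb, hab, rfl⟩
  refine ⟨fun h => ?_, fun k l hkl => ?_⟩
  · have hi := congrFun h i
    have hj := congrFun h j
    simp only [Pi.add_apply, Pi.smul_apply, Pi.neg_apply, Pi.zero_apply, smul_eq_mul,
      Pi.single_eq_same, Pi.single_eq_of_ne hij, Pi.single_eq_of_ne hij.symm] at hi hj
    linarith
  · simp only [Pi.add_apply, Pi.smul_apply, Pi.neg_apply, Pi.single_apply, smul_eq_mul]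
    split_ifs <;> simp_all <;> nlinarith

theorem joinedIn_single_neg_single :
    JoinedIn ({0}ᶜ ∩ signSeparated (Fin 3)) (Pi.single 0 1) (-Pi.single 0 1) := by
  have seg (i j : Fin 3) (hij : i ≠ j) :=
    JoinedIn.of_segment_subset (segment_single_neg_single_subset hij)
  -- `e₀ → -e₁ → e₂ → -e₀`
  exact ((seg 0 1 (by decide)).trans (seg 2 1 (by decide)).symm).trans (seg 2 0 (by decide))

theorem mul_nonpos_of_mul_add_mul_eq_zero {s t a b : ℝ} (hst : 0 ≤ s * t) (hne : s ≠ 0 ∨ t ≠ 0)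
    (h : s * a + t * b = 0) : a * b ≤ 0 := by
  rcases hne with hs | ht
  · have key : s ^ 2 * (a * b) = -(s * t) * b ^ 2 := by linear_combination s * b * h
    nlinarith [sq_nonneg b, pow_pos (abs_pos.2 hs) 2, sq_abs s]
  · have key : t ^ 2 * (a * b) = -(s * t) * a ^ 2 := by linear_combination t * a * h
    nlinarith [sq_nonneg a, pow_pos (abs_pos.2 ht) 2, sq_abs t]

theorem exists_pair_mul_nonneg {c₀ c₁ c₂ : ℝ} (h : ¬(c₀ = 0 ∧ c₁ = 0 ∧ c₂ = 0)) :
    (0 ≤ c₁ * c₂ ∧ (c₁ ≠ 0 ∨ c₂ ≠ 0)) ∨ (0 ≤ c₂ * c₀ ∧ (c₂ ≠ 0 ∨ c₀ ≠ 0)) ∨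
      (0 ≤ c₀ * c₁ ∧ (c₀ ≠ 0 ∨ c₁ ≠ 0)) := by
  by_contra! hcon
  obtain ⟨h₁₂, h₂₀, h₀₁⟩ := hcon
  rcases le_or_gt 0 (c₁ * c₂) with h12 | h12
  · obtain ⟨rfl, rfl⟩ := h₁₂ h12
    exact h ⟨(h₀₁ (by simp)).1, rfl, rfl⟩
  rcases le_or_gt 0 (c₂ * c₀) with h20 | h20
  · obtain ⟨rfl, rfl⟩ := h₂₀ h20
    simp at h12
  rcases le_or_gt 0 (c₀ * c₁) with h01 | h01
  · obtain ⟨rfl, rfl⟩ := h₀₁ h01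
    simp at h12
  -- three negative pairwise products would multiply to the square `(c₀ * c₁ * c₂) ^ 2`
  nlinarith [mul_pos_of_neg_of_neg h12 h20, sq_nonneg (c₀ * c₁ * c₂)]

theorem exists_forall_mem_signSeparated {φ : Dual ℝ (Fin 3 → ℝ)} (hφ : φ ≠ 0) :
    ∃ i, ∀ y : Fin 3 → ℝ, y i = 0 → φ y = 0 → y ∈ signSeparated (Fin 3) := by
  set c : Fin 3 → ℝ := fun k => φ (Pi.single k 1)
  have hφc : ∀ y, φ y = c 0 * y 0 + c 1 * y 1 + c 2 * y 2 := fun y => by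
    conv_lhs => rw [pi_eq_sum_univ' y]
    simp [Fin.sum_univ_three, c, mul_comm]
  have hc : ¬(c 0 = 0 ∧ c 1 = 0 ∧ c 2 = 0) := fun ⟨h0, h1, h2⟩ =>
    hφ (LinearMap.ext fun y => by simp [hφc, h0, h1, h2])
  rcases exists_pair_mul_nonneg hc with ⟨hs, hne⟩ | ⟨hs, hne⟩ | ⟨hs, hne⟩
  · refine ⟨0, fun y hy hφy => mem_signSeparated_fin_three_iff.2 ⟨by simp [hy], ?_, by simp [hy]⟩⟩
    exact mul_nonpos_of_mul_add_mul_eq_zero hs hne (by rw [hφc, hy] at hφy; linarith)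
  · refine ⟨1, fun y hy hφy => mem_signSeparated_fin_three_iff.2 ⟨by simp [hy], by simp [hy], ?_⟩⟩
    exact mul_nonpos_of_mul_add_mul_eq_zero hs hne (by rw [hφc, hy] at hφy; linarith)
  · refine ⟨2, fun y hy hφy => mem_signSeparated_fin_three_iff.2 ⟨?_, by simp [hy], by simp [hy]⟩⟩
    exact mul_nonpos_of_mul_add_mul_eq_zero hs hne (by rw [hφc, hy] at hφy; linarith)

section
variable {E : Type*} [NormedAddCommGroup E] [NormedSpace ℝ E]

theorem exists_joinedIn_neg_of_surjective {g : E →ₗ[ℝ] Fin 3 → ℝ}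
    (hg : Function.Surjective g) :
    ∃ u, JoinedIn ({0}ᶜ ∩ g ⁻¹' signSeparated (Fin 3)) u (-u) := by
  obtain ⟨σ, hσ⟩ := g.exists_rightInverse_of_surjective (LinearMap.range_eq_top.2 hg)
  have hgσ : ∀ y, g (σ y) = y := fun y => LinearMap.congr_fun hσ y
  refine ⟨σ (Pi.single 0 1), ?_⟩
  rw [← map_neg]
  refine (joinedIn_single_neg_single.map σ.continuous_of_finiteDimensional).mono ?_
  rintro _ ⟨y, ⟨hy0, hy⟩, rfl⟩
  exact ⟨fun h => hy0 (by simpa [hgσ] using congrArg g h), by simpa [hgσ] using hy⟩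

theorem exists_joinedIn_neg_of_not_surjective [FiniteDimensional ℝ E] (hE : 3 ≤ finrank ℝ E)
    {g : E →ₗ[ℝ] Fin 3 → ℝ} (hg : ¬Function.Surjective g) :
    ∃ u, JoinedIn ({0}ᶜ ∩ g ⁻¹' signSeparated (Fin 3)) u (-u) := by
  obtain ⟨φ, hφ, hφg⟩ := Submodule.exists_dual_map_eq_bot_of_lt_top
    (lt_top_iff_ne_top.2 (mt LinearMap.range_eq_top.1 hg)) inferInstance
  -- `φ` is a nontrivial linear relation between the three coordinates of `g`
  obtain ⟨i, hi⟩ := exists_forall_mem_signSeparated hφ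
  set gᵢ := LinearMap.proj i ∘ₗ g
  have hK : 2 ≤ finrank ℝ (LinearMap.ker gᵢ) := by
    have := gᵢ.finrank_range_add_finrank_ker
    have := (LinearMap.range gᵢ).finrank_le
    rw [finrank_self] at this
    omega
  set K := LinearMap.ker gᵢ
  have : Nontrivial K := Module.nontrivial_of_finrank_pos (by omega : 0 < finrank ℝ K)
  obtain ⟨u, hu⟩ : ∃ u : K, u ≠ 0 := exists_ne 0
  have hKc := isPathConnected_compl_singleton_of_one_lt_rank (by
    rw [← finrank_eq_rank]; exact_mod_cast hK) (0 : K)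
  have hu' : JoinedIn {0}ᶜ u (-u) := hKc.joinedIn u hu (-u) (neg_ne_zero.2 hu)
  refine ⟨u, (hu'.map continuous_subtype_val).mono ?_⟩
  rintro _ ⟨x, hx, rfl⟩
  refine ⟨by simpa using hx, hi _ x.2 ?_⟩
  have : φ (g x) ∈ Submodule.map φ (LinearMap.range g) := ⟨g x, ⟨x, rfl⟩, rfl⟩
  simpa [hφg] using this

theorem exists_ne_zero_mem_signSeparated [FiniteDimensional ℝ E] (hE : 3 ≤ finrank ℝ E)
    (f g : E →ₗ[ℝ] Fin 3 → ℝ) :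
    ∃ x ≠ 0, f x ∈ signSeparated (Fin 3) ∧ g x ∈ signSeparated (Fin 3) := by
  obtain ⟨u, hu⟩ : ∃ u, JoinedIn ({0}ᶜ ∩ g ⁻¹' signSeparated (Fin 3)) u (-u) := by
    by_cases hg : Function.Surjective g
    · exact exists_joinedIn_neg_of_surjective hg
    · exact exists_joinedIn_neg_of_not_surjective hE hg
  obtain ⟨x, ⟨hx0, hgx⟩, hfx⟩ := hu.exists_eq_zero_of_map_neg
    (continuous_median3.comp f.continuous_of_finiteDimensional) (by simp [median3_neg])
  exact ⟨x, hx0, mem_signSeparated_of_median3_eq_zero hfx, hgx⟩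

end

theorem Set.Pairwise.ncard_le_one_of_mul_pos {ι : Type*} [Finite ι] {s : Set ι} {v : ι → ℝ}
    (hs : s.Pairwise fun i j => v i * v j ≤ 0) {P : ι → Prop}
    (hP : ∀ i j, P i → P j → 0 < v i * v j) : {i | i ∈ s ∧ P i}.ncard ≤ 1 :=
  (Set.ncard_le_one (Set.toFinite _)).2 fun i ⟨his, hi⟩ j ⟨hjs, hj⟩ => by
    by_contra hij
    exact (hs his hjs hij).not_gt (hP i j hi hj)

theorem ncard_le_of_forall_ncard_le_one {ι : Type*} [Finite ι] {cls : ι → ℕ} {d : ℕ}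
    (hcls : ∀ i, cls i < d) {P : ι → Prop} (h : ∀ c < d, {i | cls i = c ∧ P i}.ncard ≤ 1) :
    {i | P i}.ncard ≤ d := by
  have hinj : Set.InjOn cls {i | P i} := fun i hi j hj hij =>
    (Set.ncard_le_one (Set.toFinite _)).1 (h (cls i) (hcls i)) i ⟨rfl, hi⟩ j ⟨hij.symm, hj⟩
  simpa using Set.ncard_le_ncard_of_injOn cls (t := ↑(Finset.range d))
    (fun i _ => by simpa using hcls i) hinj

theorem card_le_ncard_pos_add_ncard_neg_add_ncard_zero {ι : Type*} [Finite ι] (v : ι → ℝ) :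
    Nat.card ι ≤ {i | 0 < v i}.ncard + {i | v i < 0}.ncard + {i | v i = 0}.ncard := by
  have hcover : Set.univ = {i | 0 < v i} ∪ {i | v i < 0} ∪ {i | v i = 0} := by
    refine (Set.eq_univ_of_forall fun i => ?_).symm
    rcases lt_trichotomy (v i) 0 with h | h | h
    exacts [Or.inl (Or.inr h), Or.inr h, Or.inl (Or.inl h)]
  rw [← Set.ncard_univ, hcover]
  exact (Set.ncard_union_le _ _).trans (Nat.add_le_add_right (Set.ncard_union_le _ _) _)

theorem ncard_setOf_apply_eq_zero_lt {K V ι : Type*} [Field K] [AddCommGroup V] [Module K V]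
    [FiniteDimensional K V] [Fintype ι] (p : ι → V)
    (hgen : ∀ s : Finset ι, s.card = finrank K V → LinearIndependent K fun i : s => p i)
    {φ : Dual K V} (hφ : φ ≠ 0) : {i | φ (p i) = 0}.ncard < finrank K V := by
  classical
  by_contra! h
  rw [Set.ncard_eq_toFinset_card'] at h
  obtain ⟨s, hs, hcard⟩ := Finset.exists_subset_card_eq h
  have hspan := (hgen s hcard).span_eq_top_of_card_eq_finrank' (by simpa using hcard)
  refine hφ (LinearMap.ext_on_range hspan fun i => ?_)
  simpa using hs i.2

theorem classIdx_lt {d j : ℕ} (hd : 2 ≤ d) (hj : j < 2 * d + 2) : classIdx j < d := by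
  unfold classIdx; split_ifs <;> omega

theorem classIdx_eq_zero_iff {j : ℕ} : classIdx j = 0 ↔ j < 3 := by
  unfold classIdx; grind

theorem classIdx_eq_one_iff {j : ℕ} : classIdx j = 1 ↔ 3 ≤ j ∧ j < 6 := by
  unfold classIdx; grind

theorem classIdx_eq_iff {j c : ℕ} (hc : 2 ≤ c) :
    classIdx j = c ↔ j = 2 * c + 2 ∨ j = 2 * c + 3 := by
  unfold classIdx; grind

theorem exists_ne_zero_classwise_inner_mul_nonpos {E : Type*} [NormedAddCommGroup E]
    [InnerProductSpace ℝ E] [FiniteDimensional ℝ E] {d : ℕ} (hd : 2 ≤ d)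
    (hE : d + 1 ≤ finrank ℝ E) (p : Fin (2 * d + 2) → E) :
    ∃ α ≠ 0, ∀ c, {i : Fin (2 * d + 2) | classIdx i = c}.Pairwise
      fun i j => ⟪α, p i⟫ * ⟪α, p j⟫ ≤ 0 := by
  let ev (i : Fin (2 * d + 2)) : E →ₗ[ℝ] ℝ := (innerₗ E).flip (p i)
  -- class `k + 2` consists of the indices `2k + 6` and `2k + 7`
  let Φ : E →ₗ[ℝ] Fin (d - 2) → ℝ :=
    LinearMap.pi fun k => ev ⟨2 * k + 6, by omega⟩ + ev ⟨2 * k + 7, by omega⟩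
  have hW : 3 ≤ finrank ℝ (LinearMap.ker Φ) := by
    have := Φ.finrank_range_add_finrank_ker
    have := (LinearMap.range Φ).finrank_le
    rw [finrank_fin_fun] at this
    omega
  let e₀ : Fin 3 → Fin (2 * d + 2) := fun k => ⟨k, by omega⟩
  let e₁ : Fin 3 → Fin (2 * d + 2) := fun k => ⟨k + 3, by omega⟩
  obtain ⟨⟨α, hαW⟩, hα0, h₀, h₁⟩ := exists_ne_zero_mem_signSeparated hW
    (LinearMap.pi (fun k => ev (e₀ k)) ∘ₗ (LinearMap.ker Φ).subtype)
    (LinearMap.pi (fun k => ev (e₁ k)) ∘ₗ (LinearMap.ker Φ).subtype)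
  refine ⟨α, fun h => hα0 (Subtype.ext h), fun c => ?_⟩
  set R : Fin (2 * d + 2) → Fin (2 * d + 2) → Prop := fun i j => ⟪α, p i⟫ * ⟪α, p j⟫ ≤ 0
  rcases (by omega : c = 0 ∨ c = 1 ∨ 2 ≤ c) with rfl | rfl | hc
  · refine (Pairwise.range_pairwise (r := R) (f := e₀) h₀).mono fun i hi => ?_
    exact ⟨⟨i, classIdx_eq_zero_iff.1 hi⟩, rfl⟩
  · refine (Pairwise.range_pairwise (r := R) (f := e₁) h₁).mono fun i hi => ?_
    have := classIdx_eq_one_iff.1 hi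
    exact ⟨⟨i - 3, by omega⟩, Fin.ext (by simp [e₁]; omega)⟩
  · have hpair : ∀ a b : Fin (2 * d + 2), (a : ℕ) = 2 * c + 2 → (b : ℕ) = 2 * c + 3 →
        ⟪α, p a⟫ * ⟪α, p b⟫ ≤ 0 := by
      intro a b ha hb
      have hsum := congr_fun (LinearMap.mem_ker.1 hαW) ⟨c - 2, by omega⟩
      simp only [Φ, ev, flip_innerₗ, LinearMap.pi_apply, LinearMap.add_apply, innerₗ_apply_apply,
        Pi.zero_apply] at hsum
      rw [show (⟨2 * (c - 2) + 6, _⟩ : Fin (2 * d + 2)) = a from Fin.ext (by simp only; omega),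
        show (⟨2 * (c - 2) + 7, _⟩ : Fin (2 * d + 2)) = b from Fin.ext (by simp only; omega),
        real_inner_comm, real_inner_comm α] at hsum
      rw [eq_neg_of_add_eq_zero_right hsum, mul_neg]
      exact neg_nonpos.2 (mul_self_nonneg _)
    intro i hi j hj hij
    rcases (classIdx_eq_iff hc).1 hi with hi | hi <;>
      rcases (classIdx_eq_iff hc).1 hj with hj | hj
    · exact absurd (Fin.ext (hi.trans hj.symm)) hij
    · exact hpair i j hi hj
    · exact (mul_comm _ _).trans_le (hpair j i hj hi)
    · exact absurd (Fin.ext (hi.trans hj.symm)) hij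

/-- **Ham-Sandwich step.** Let `d ≥ 3` and let `p_1, …, p_{2d+2}` be vectors
in `ℝ^(d+1)` such that every `d + 1` of them are linearly independent. Then there is a
nonzero `α ∈ ℝ^(d+1)` such that each open half-space `{x : ⟨α,x⟩ > 0}`, `{x : ⟨α,x⟩ < 0}`
contains at least two of the `p_i`, and at most one point from each class `C_i`. -/
theorem ham_sandwich_gale_step (d : ℕ) (hd : 3 ≤ d)
    (p : Fin (2 * d + 2) → EuclideanSpace ℝ (Fin (d + 1)))
    (hgen : ∀ s : Finset (Fin (2 * d + 2)), s.card = d + 1 →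
      LinearIndependent ℝ (fun i : s => p i.1)) :
    ∃ α : EuclideanSpace ℝ (Fin (d + 1)), α ≠ 0 ∧
      2 ≤ {i : Fin (2 * d + 2) | 0 < ∑ k, α k * p i k}.ncard ∧
      2 ≤ {i : Fin (2 * d + 2) | ∑ k, α k * p i k < 0}.ncard ∧
      (∀ c < d,
        {i : Fin (2 * d + 2) | classIdx (i : ℕ) = c ∧ 0 < ∑ k, α k * p i k}.ncard ≤ 1) ∧
      (∀ c < d,
        {i : Fin (2 * d + 2) | classIdx (i : ℕ) = c ∧ ∑ k, α k * p i k < 0}.ncard ≤ 1) := by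
  obtain ⟨α, hα0, hsep⟩ := exists_ne_zero_classwise_inner_mul_nonpos (by omega) (by simp) p
  have hinner : ∀ i, ∑ k, α k * p i k = ⟪α, p i⟫ := fun i => by
    simp [PiLp.inner_apply, mul_comm]
  refine ⟨α, hα0, ?_⟩
  simp only [hinner]
  have hcls : ∀ i : Fin (2 * d + 2), classIdx i < d := fun i => classIdx_lt (by omega) i.2
  have hpos c := (hsep c).ncard_le_one_of_mul_pos fun _ _ => mul_pos
  have hneg c := (hsep c).ncard_le_one_of_mul_pos fun _ _ => mul_pos_of_neg_of_neg
  have hzero := ncard_setOf_apply_eq_zero_lt (φ := (innerSL ℝ α : _ →ₗ[ℝ] ℝ)) p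
    (by simpa using hgen) fun h => hα0 (by simpa using congr($h α))
  have htotal := card_le_ncard_pos_add_ncard_neg_add_ncard_zero fun i => ⟪α, p i⟫
  have := ncard_le_of_forall_ncard_le_one hcls fun c _ => hpos c
  have := ncard_le_of_forall_ncard_le_one hcls fun c _ => hneg c
  simp only [ContinuousLinearMap.coe_coe, innerSL_apply_apply, finrank_euclideanSpace_fin,
    Nat.card_eq_fintype_card, Fintype.card_fin] at hzero htotal
  exact ⟨by omega, by omega, fun c _ => hpos c, fun c _ => hneg c⟩
end
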